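/- arXiv:2504.03552 — 3 statements merged into one kernel-verified Lean document; each statement's English description precedes it below -/
import Mathlib

section
/- Let K be a connected subset of a weighted graph Γ = (V, b, c) such that ∑_{x,y ∈ K, b(x,y)>0} 1/b(x,y) < ∞. Then there exists C > 0 such that for all f in the Neumann form domain, sup_{x∈K} f(x) - inf_{y∈K} f(y) ≤ C · q^{(N)}(f)^{1/2}; in particular the restriction map f ↦ χ_K f is bounded from the Neumann form domain (with form norm) into ℓ^∞. -/
/-- The Neumann form `q^{(N)}(f) = (1/2)∑_{x,y} b(x,y)(f y - f x)² + ∑_x (c x + m x) f x²`. -/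
noncomputable def neumannForm {V : Type*} (b : V → V → ℝ) (c m : V → ℝ) (f : V → ℝ) : ℝ :=
  (1 / 2) * ∑' q : V × V, b q.1 q.2 * (f q.2 - f q.1) ^ 2 +
    ∑' x : V, (c x + m x) * f x ^ 2

/-!
Join two points of `K` by a shortest path `x₀ ~ x₁ ~ ⋯ ~ xₙ` inside `K`; its edges are pairwise
distinct. Telescoping and Cauchy–Schwarz give
`(f xₙ - f x₀)² ≤ (∑ⱼ 1 / b(xⱼ, xⱼ₊₁)) · (∑ⱼ b(xⱼ, xⱼ₊₁) (f xⱼ₊₁ - f xⱼ)²)`,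
and distinctness bounds the two factors by `∑_{K × K} 1 / b` and by `2 q^{(N)}(f)`.
Finally `m(x₀) f(x₀)² ≤ q^{(N)}(f)` at one fixed point of `K` turns the oscillation bound into a
sup bound.
-/

open Finset

section Chains

variable {α : Type*} {R : α → α → Prop}

theorem exists_chain_shortcut_of_eq {n : ℕ} {p : ℕ → α} (hp : ∀ j < n, R (p j) (p (j + 1)))
    {i k : ℕ} (hik : i < k) (hkn : k ≤ n) (heq : p i = p k) :
    ∃ p' : ℕ → α, p' 0 = p 0 ∧ p' (n - (k - i)) = p n ∧
      ∀ j < n - (k - i), R (p' j) (p' (j + 1)) := by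
  refine ⟨fun j => p (if j ≤ i then j else j + (k - i)), by simp, ?_, fun j hj => ?_⟩
  · by_cases h : n - (k - i) ≤ i
    · simp only [if_pos h]
      rw [show n - (k - i) = i by omega, heq, show k = n by omega]
    · simp only [if_neg h]
      rw [Nat.sub_add_cancel (by omega)]
  · rcases lt_trichotomy j i with hji | rfl | hij
    · simp only [if_pos hji.le, if_pos (Nat.succ_le_of_lt hji)]
      exact hp j (by omega)
    · simp only [le_refl, if_true, if_neg (Nat.not_succ_le_self j), heq,
        show j + 1 + (k - j) = k + 1 by omega]
      exact hp k (by omega)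
    · simp only [if_neg (show ¬j ≤ i by omega), if_neg (show ¬j + 1 ≤ i by omega),
        show j + 1 + (k - i) = j + (k - i) + 1 by omega]
      exact hp _ (by omega)

theorem exists_chain_injOn {x y : α}
    (h : ∃ n, ∃ p : ℕ → α, p 0 = x ∧ p n = y ∧ ∀ j < n, R (p j) (p (j + 1))) :
    ∃ n, ∃ p : ℕ → α, p 0 = x ∧ p n = y ∧ (∀ j < n, R (p j) (p (j + 1))) ∧
      Set.InjOn p (Set.Iic n) := by
  classical
  obtain ⟨p, hp0, hpn, hp⟩ := Nat.find_spec h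
  refine ⟨Nat.find h, p, hp0, hpn, hp, fun i hi k hk heq => ?_⟩
  by_contra hne
  wlog hik : i < k generalizing i k
  · exact this k hk i hi heq.symm (Ne.symm hne) (by omega)
  obtain ⟨p', hp'0, hp'n, hp'⟩ := exists_chain_shortcut_of_eq hp hik hk heq
  exact Nat.find_min h (show Nat.find h - (k - i) < Nat.find h by grind)
    ⟨p', hp'0.trans hp0, hp'n.trans hpn, hp'⟩

end Chains

theorem sum_range_le_tsum_of_injOn {α : Type*} {g : α → ℝ} (hg : ∀ a, 0 ≤ g a)
    (hsum : Summable g) {n : ℕ} {e : ℕ → α} (he : Set.InjOn e (range n)) :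
    ∑ j ∈ range n, g (e j) ≤ ∑' a, g a := by
  classical
  rw [← sum_image he]
  exact hsum.sum_le_tsum _ fun a _ => hg a

section WeightedGraph

variable {V : Type*}

theorem exists_chain_subtype_of_walk {K : Set V} {R : V → V → Prop} {x y : V} (hx : x ∈ K)
    {n : ℕ} {p : ℕ → V} (hp0 : p 0 = x) (hpn : p n = y)
    (hp : ∀ j, 1 ≤ j → j ≤ n → p j ∈ K ∧ p (j - 1) ∈ K ∧ R (p (j - 1)) (p j)) :
    ∃ q : ℕ → K, (q 0 : V) = x ∧ (q n : V) = y ∧ ∀ j < n, R (q j) (q (j + 1)) := by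
  have hmem : ∀ j ≤ n, p j ∈ K := fun j hj => by
    rcases j.eq_zero_or_pos with rfl | hj0
    · exact hp0 ▸ hx
    · exact (hp j hj0 hj).1
  refine ⟨fun j => ⟨p (min j n), hmem _ (min_le_right _ _)⟩, by simp [hp0], by simp [hpn],
    fun j hj => ?_⟩
  simpa [min_eq_left hj.le, min_eq_left (Nat.succ_le_of_lt hj)] using (hp (j + 1) (by omega) hj).2.2

/-- Cauchy–Schwarz along a path with positive weights. -/
theorem sub_le_sqrt_mul_sqrt_of_chain (b : V → V → ℝ) (f : V → ℝ) {n : ℕ} {p : ℕ → V}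
    (hp : ∀ j < n, 0 < b (p j) (p (j + 1))) :
    f (p n) - f (p 0) ≤ √(∑ j ∈ range n, 1 / b (p j) (p (j + 1))) *
      √(∑ j ∈ range n, b (p j) (p (j + 1)) * (f (p (j + 1)) - f (p j)) ^ 2) := by
  have hterm : ∀ j ∈ range n, f (p (j + 1)) - f (p j) =
      (1 / √(b (p j) (p (j + 1)))) * (√(b (p j) (p (j + 1))) * (f (p (j + 1)) - f (p j))) :=
    fun j hj => by
      have := Real.sqrt_pos.2 (hp j (mem_range.1 hj))
      field_simp
  rw [← sum_range_sub (fun j => f (p j)), sum_congr rfl hterm]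
  convert Real.sum_mul_le_sqrt_mul_sqrt (range n) _ _ using 3 <;>
    refine sum_congr rfl fun j hj => ?_ <;>
    simp [mul_pow, Real.sq_sqrt (hp j (mem_range.1 hj)).le]

theorem sub_le_sqrt_mul_sqrt_of_mem {b : V → V → ℝ} {K : Set V} (hb : ∀ x y, 0 ≤ b x y)
    (hconn : ∀ x ∈ K, ∀ y ∈ K, ∃ (n : ℕ) (p : ℕ → V), p 0 = x ∧ p n = y ∧
      ∀ j, 1 ≤ j → j ≤ n → p j ∈ K ∧ p (j - 1) ∈ K ∧ 0 < b (p (j - 1)) (p j))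
    (hrecip : Summable fun q : K × K =>
      if 0 < b q.1.1 q.2.1 then 1 / b q.1.1 q.2.1 else 0)
    {f : V → ℝ} (hf : Summable fun q : V × V => b q.1 q.2 * (f q.2 - f q.1) ^ 2)
    {x y : V} (hx : x ∈ K) (hy : y ∈ K) :
    f x - f y ≤ √(∑' q : K × K, if 0 < b q.1.1 q.2.1 then 1 / b q.1.1 q.2.1 else 0) *
      √(∑' q : V × V, b q.1 q.2 * (f q.2 - f q.1) ^ 2) := by
  obtain ⟨n, p, hp0, hpn, hp⟩ := hconn y hy x hx
  obtain ⟨q, hq0, hqn, hq⟩ :=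
    exists_chain_subtype_of_walk (R := fun u v => 0 < b u v) hy hp0 hpn hp
  obtain ⟨n, q', hq'0, hq'n, hq', hinj⟩ := exists_chain_injOn (R := fun u v : K => 0 < b u v)
    ⟨n, q, rfl, rfl, hq⟩
  rw [← hq0, ← hqn, ← hq'0, ← hq'n]
  have hedges : Set.InjOn (fun j => (q' j, q' (j + 1))) (range n) := fun i hi k hk h =>
    hinj (mem_range.1 hi).le (mem_range.1 hk).le (Prod.ext_iff.1 h).1
  refine (sub_le_sqrt_mul_sqrt_of_chain b f (p := fun j => (q' j : V)) hq').trans ?_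
  gcongr
  · calc ∑ j ∈ range n, 1 / b (q' j) (q' (j + 1))
        = ∑ j ∈ range n, if 0 < b (q' j) (q' (j + 1)) then 1 / b (q' j) (q' (j + 1)) else 0 :=
          sum_congr rfl fun j hj => (if_pos (hq' j (mem_range.1 hj))).symm
      _ ≤ _ := sum_range_le_tsum_of_injOn (fun _ => by split_ifs <;> positivity) hrecip hedges
  · refine sum_range_le_tsum_of_injOn (fun _ => mul_nonneg (hb _ _) (sq_nonneg _)) hf
      (e := fun j => ((q' j : V), (q' (j + 1) : V))) fun i hi k hk h => hedges hi hk ?_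
    simpa [Prod.ext_iff, Subtype.val_inj] using h

section NeumannForm

variable {b : V → V → ℝ} {c m f : V → ℝ}

theorem tsum_mul_sq_sub_le_two_mul_neumannForm (hc : ∀ x, 0 ≤ c x) (hm : ∀ x, 0 ≤ m x) :
    ∑' q : V × V, b q.1 q.2 * (f q.2 - f q.1) ^ 2 ≤ 2 * neumannForm b c m f := by
  have : 0 ≤ ∑' x, (c x + m x) * f x ^ 2 :=
    tsum_nonneg fun x => mul_nonneg (add_nonneg (hc x) (hm x)) (sq_nonneg _)
  rw [neumannForm]
  linarith

theorem mul_sq_le_neumannForm (hb : ∀ x y, 0 ≤ b x y) (hc : ∀ x, 0 ≤ c x)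
    (hm : ∀ x, 0 ≤ m x) (hf : Summable fun x => (c x + m x) * f x ^ 2) (x : V) :
    m x * f x ^ 2 ≤ neumannForm b c m f := by
  have hdirichlet : 0 ≤ ∑' q : V × V, b q.1 q.2 * (f q.2 - f q.1) ^ 2 :=
    tsum_nonneg fun q => mul_nonneg (hb _ _) (sq_nonneg _)
  have hx : (c x + m x) * f x ^ 2 ≤ ∑' y, (c y + m y) * f y ^ 2 :=
    hf.le_tsum x fun y _ => mul_nonneg (add_nonneg (hc y) (hm y)) (sq_nonneg _)
  have hcx : m x * f x ^ 2 ≤ (c x + m x) * f x ^ 2 :=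
    mul_le_mul_of_nonneg_right (le_add_of_nonneg_left (hc x)) (sq_nonneg _)
  rw [neumannForm]
  linarith

theorem abs_le_sqrt_neumannForm_div (hb : ∀ x y, 0 ≤ b x y) (hc : ∀ x, 0 ≤ c x)
    (hm : ∀ x, 0 ≤ m x) (hf : Summable fun x => (c x + m x) * f x ^ 2) {x : V} (hmx : 0 < m x) :
    |f x| ≤ √(neumannForm b c m f) / √(m x) := by
  rw [← Real.sqrt_div' _ hmx.le]
  refine Real.abs_le_sqrt ((le_div_iff₀ hmx).2 ?_)
  linarith [mul_sq_le_neumannForm hb hc hm hf x]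

end NeumannForm

end WeightedGraph

/-- if `∑_{x,y ∈ K, b(x,y)>0} 1/b(x,y) < ∞` for a connected subset `K`,
then the oscillation on `K` is controlled by `q^{(N)}(f)^{1/2}` and the restriction map
`f ↦ χ_K f` is bounded from the Neumann form domain into `ℓ^∞`. -/
theorem connected_subset_summable_reciprocal_weights_bounded_restriction
    {V : Type*} (b : V → V → ℝ) (c m : V → ℝ) (K : Set V)
    (hm : ∀ x, 0 < m x) (hc : ∀ x, 0 ≤ c x) (hb : ∀ x y, 0 ≤ b x y)
    (hKne : K.Nonempty)
    (hconn : ∀ x ∈ K, ∀ y ∈ K, ∃ (n : ℕ) (p : ℕ → V), p 0 = x ∧ p n = y ∧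
      ∀ j, 1 ≤ j → j ≤ n → p j ∈ K ∧ p (j - 1) ∈ K ∧ 0 < b (p (j - 1)) (p j))
    (hrecip : Summable fun q : K × K =>
      if 0 < b q.1.1 q.2.1 then 1 / b q.1.1 q.2.1 else 0) :
    ∃ C > 0, ∀ f : V → ℝ,
      (Summable fun q : V × V => b q.1 q.2 * (f q.2 - f q.1) ^ 2) →
      (Summable fun x : V => (c x + m x) * f x ^ 2) →
      (∀ x ∈ K, ∀ y ∈ K, f x - f y ≤ C * Real.sqrt (neumannForm b c m f)) ∧
      (∀ x ∈ K, |f x| ≤ C * Real.sqrt (neumannForm b c m f)) := by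
  obtain ⟨x₀, hx₀⟩ := hKne
  set S := ∑' q : K × K, if 0 < b q.1.1 q.2.1 then 1 / b q.1.1 q.2.1 else 0
  have hmx₀ := hm x₀
  refine ⟨√S * √2 + 1 / √(m x₀), by positivity, fun f hdirichlet hmass => ?_⟩
  set Q := neumannForm b c m f
  have hm' : ∀ x, 0 ≤ m x := fun x => (hm x).le
  have hosc : ∀ x ∈ K, ∀ y ∈ K, f x - f y ≤ √S * √(2 * Q) := fun x hx y hy =>
    (sub_le_sqrt_mul_sqrt_of_mem hb hconn hrecip hdirichlet hx hy).trans <| by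
      gcongr
      exact tsum_mul_sq_sub_le_two_mul_neumannForm hc hm'
  have hfx₀ : |f x₀| ≤ √Q / √(m x₀) := abs_le_sqrt_neumannForm_div hb hc hm' hmass hmx₀
  have hC : (√S * √2 + 1 / √(m x₀)) * √Q = √S * √(2 * Q) + √Q / √(m x₀) := by
    rw [Real.sqrt_mul zero_le_two]
    ring
  refine ⟨fun x hx y hy => ?_, fun x hx => ?_⟩
  · have : 0 ≤ √Q / √(m x₀) := by positivity
    linarith [hosc x hx y hy]
  · have hxx₀ : |f x - f x₀| ≤ √S * √(2 * Q) :=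
      abs_sub_le_iff.2 ⟨hosc x hx x₀ hx₀, hosc x₀ hx₀ x hx⟩
    linarith [abs_sub_abs_le_abs_sub (f x) (f x₀)]
end

section
/- Suppose Γ = (V, b, c) satisfies: there exists a subset K ⊆ V with finite diameter (for the path metric d) and a constant c̃ > 0 such that c(x) + m(x) ≥ c̃ for all x ∈ V \ K. Then there is a continuous embedding of the Neumann form domain into ℓ^∞, i.e. there exists C > 0 with ‖u‖_∞ ≤ C · q^{(N)}(u)^{1/2} for all u in the form domain. -/
/-- The path (pseudo-)metric on a weighted graph. -/
noncomputable def graphDist {V : Type*} (b : V → V → ℝ) (x y : V) : ℝ :=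
  sInf {L : ℝ | ∃ (n : ℕ) (p : ℕ → V), p 0 = x ∧ p n = y ∧
    (∀ j, 1 ≤ j → j ≤ n → 0 < b (p (j - 1)) (p j)) ∧
    L = ∑ j ∈ Finset.Icc 1 n, 1 / b (p (j - 1)) (p j)}

/-!
Outside `K` the potential term alone gives `(c x + m x) u(x)² ≤ q(u)`, hence
`|u x| ≤ c̃^{-1/2} q(u)^{1/2}`. Inside `K`, fix a base point `o ∈ K`. By loop erasure, `x` and `o`
are joined by walks with pairwise distinct vertices of length arbitrarily close to
`d(x, o) ≤ D`; along such a walk telescoping and Cauchy–Schwarz give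
`(u o - u x)² ≤ (∑ 1/b) · (∑ b (Δu)²) ≤ d(x, o) · 2 q(u)`, and `|u o|` is controlled by the
potential term at `o`, where `c + m > 0`.
-/

open Finset

theorem Finset.sum_comp_le_sum_of_injOn {ι κ M : Type*} [AddCommMonoid M] [PartialOrder M]
    [IsOrderedAddMonoid M] {s : Finset ι} {t : Finset κ} (e : ι → κ) (he : Set.InjOn e s)
    (hest : Set.MapsTo e s t) {f : κ → M} (hf : ∀ j ∈ t, 0 ≤ f j) :
    ∑ i ∈ s, f (e i) ≤ ∑ j ∈ t, f j := by
  classical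
  rw [← Finset.sum_image he]
  exact sum_le_sum_of_subset_of_nonneg (image_subset_iff.2 hest) fun j hj _ => hf j hj

theorem Finset.sum_Icc_one_sub {G : Type*} [AddCommGroup G] (f : ℕ → G) (n : ℕ) :
    ∑ k ∈ Icc 1 n, (f k - f (k - 1)) = f n - f 0 := by
  induction n with
  | zero => simp
  | succ n ih =>
    rw [sum_Icc_succ_top (by omega), ih, Nat.add_sub_cancel]
    abel

theorem abs_le_sqrt_mul_sqrt_of_sq_le_mul {t a s : ℝ} (ha : 0 ≤ a) (h : t ^ 2 ≤ a * s) :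
    |t| ≤ √a * √s :=
  Real.sqrt_mul ha s ▸ Real.abs_le_sqrt h

section Walks

variable {V : Type*}

def IsWalk (b : V → V → ℝ) (n : ℕ) (p : ℕ → V) : Prop :=
  ∀ j, 1 ≤ j → j ≤ n → 0 < b (p (j - 1)) (p j)

noncomputable def walkLength (b : V → V → ℝ) (n : ℕ) (p : ℕ → V) : ℝ :=
  ∑ j ∈ Icc 1 n, 1 / b (p (j - 1)) (p j)

variable {b : V → V → ℝ} {n : ℕ} {p : ℕ → V}

theorem IsWalk.pos (hp : IsWalk b n p) {j : ℕ} (hj : j ∈ Icc 1 n) : 0 < b (p (j - 1)) (p j) :=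
  hp j (mem_Icc.1 hj).1 (mem_Icc.1 hj).2

theorem IsWalk.walkLength_nonneg (hp : IsWalk b n p) : 0 ≤ walkLength b n p :=
  sum_nonneg fun _ hj => (one_div_pos.2 (hp.pos hj)).le

theorem graphDist_nonneg (b : V → V → ℝ) (x y : V) : 0 ≤ graphDist b x y :=
  Real.sInf_nonneg <| by
    rintro _ ⟨n, p, -, -, hp, rfl⟩
    exact IsWalk.walkLength_nonneg hp

theorem IsWalk.exists_shorter_of_eq (hp : IsWalk b n p) {i j : ℕ} (hij : i < j) (hjn : j ≤ n)
    (he : p i = p j) :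
    ∃ N < n, ∃ q : ℕ → V, q 0 = p 0 ∧ q N = p n ∧ IsWalk b N q ∧
      walkLength b N q ≤ walkLength b n p := by
  -- `e` skips the closed sub-walk `p i, …, p j`
  set e : ℕ → ℕ := fun k => if k ≤ i then k else k + (j - i) with he_def
  have he_mono : StrictMono e := by
    intro k l hkl
    simp only [he_def]
    split_ifs <;> omega
  have he_maps : Set.MapsTo e (Icc 1 (n - (j - i))) (Icc 1 n) := by
    intro k hk
    simp only [coe_Icc, Set.mem_Icc, he_def] at hk ⊢
    split_ifs <;> omega
  have he_edge : ∀ k, p (e (k - 1)) = p (e k - 1) := by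
    intro k
    by_cases hki : k = i + 1
    · subst hki
      have h₁ : e (i + 1 - 1) = i := by simp [he_def]
      have h₂ : e (i + 1) - 1 = j := by simp only [he_def]; split_ifs <;> omega
      rw [h₁, h₂, he]
    · congr 1
      simp only [he_def]
      split_ifs <;> omega
  refine ⟨n - (j - i), by omega, p ∘ e, by simp [he_def], ?_, ?_, ?_⟩
  · simp only [Function.comp_apply, he_def]
    split_ifs with h
    · obtain rfl : n = j := by omega
      rw [show n - (n - i) = i by omega, he]
    · congr 1
      omega
  · intro k hk₁ hk₂
    simp only [Function.comp_apply, he_edge k]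
    exact hp.pos (he_maps (by simp [hk₁, hk₂]))
  · calc ∑ k ∈ Icc 1 (n - (j - i)), 1 / b (p (e (k - 1))) (p (e k))
        = ∑ k ∈ Icc 1 (n - (j - i)), (fun l => 1 / b (p (l - 1)) (p l)) (e k) := by
          simp only [he_edge]
      _ ≤ walkLength b n p :=
          sum_comp_le_sum_of_injOn e he_mono.injective.injOn he_maps
            fun l hl => (one_div_pos.2 (hp.pos hl)).le

theorem IsWalk.exists_injOn (hp : IsWalk b n p) :
    ∃ N q, q 0 = p 0 ∧ q N = p n ∧ IsWalk b N q ∧ Set.InjOn q (Set.Iic N) ∧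
      walkLength b N q ≤ walkLength b n p := by
  induction n using Nat.strong_induction_on generalizing p with
  | _ n ih =>
    by_cases hinj : Set.InjOn p (Set.Iic n)
    · exact ⟨n, p, rfl, rfl, hp, hinj, le_rfl⟩
    obtain ⟨i, hi, j, hj, he, hne⟩ : ∃ i ≤ n, ∃ j ≤ n, p i = p j ∧ i ≠ j := by
      simpa [Set.InjOn] using hinj
    wlog hij : i < j generalizing i j
    · exact this j hj i hi he.symm hne.symm (by omega)
    obtain ⟨N, hN, q, hq0, hqN, hq, hlen⟩ := hp.exists_shorter_of_eq hij hj he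
    obtain ⟨N', q', h0, hN', hq', hinj', hlen'⟩ := ih N hN hq
    exact ⟨N', q', h0.trans hq0, hN'.trans hqN, hq', hinj', hlen'.trans hlen⟩

theorem exists_injOn_walk_lt_of_graphDist_lt {x y : V} {L : ℝ}
    (hxy : ∃ n p, p 0 = x ∧ p n = y ∧ IsWalk b n p) (hL : graphDist b x y < L) :
    ∃ n p, p 0 = x ∧ p n = y ∧ IsWalk b n p ∧ Set.InjOn p (Set.Iic n) ∧
      walkLength b n p < L := by
  obtain ⟨n₀, p₀, hp₀⟩ := hxy
  obtain ⟨_, ⟨n, p, rfl, rfl, (hp : IsWalk b n p), rfl⟩, hlt⟩ :=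
    exists_lt_of_csInf_lt (by exact ⟨_, n₀, p₀, hp₀.1, hp₀.2.1, hp₀.2.2, rfl⟩) hL
  obtain ⟨N, q, hq0, hqN, hq, hinj, hle⟩ := hp.exists_injOn
  exact ⟨N, q, hq0, hqN, hq, hinj, hle.trans_lt hlt⟩

theorem IsWalk.sq_sub_le_walkLength_mul (hp : IsWalk b n p) (u : V → ℝ) :
    (u (p n) - u (p 0)) ^ 2 ≤
      walkLength b n p * ∑ j ∈ Icc 1 n, b (p (j - 1)) (p j) * (u (p j) - u (p (j - 1))) ^ 2 := by
  rw [← sum_Icc_one_sub (fun k => u (p k)) n]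
  refine sum_sq_le_sum_mul_sum_of_sq_le_mul _ (fun j hj => (one_div_pos.2 (hp.pos hj)).le)
    (fun j hj => mul_nonneg (hp.pos hj).le (sq_nonneg _)) fun j hj => ?_
  rw [← mul_assoc, one_div_mul_cancel (hp.pos hj).ne', one_mul]

theorem sum_walk_le_tsum {f : V × V → ℝ} (hf : ∀ e, 0 ≤ f e) (hs : Summable f)
    (hinj : Set.InjOn p (Set.Iic n)) :
    ∑ j ∈ Icc 1 n, f (p (j - 1), p j) ≤ ∑' e, f e := by
  classical
  have hedge : Set.InjOn (fun j => (p (j - 1), p j)) (Icc 1 n) := by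
    intro j hj k hk hjk
    simp only [coe_Icc, Set.mem_Icc] at hj hk
    exact hinj (Set.mem_Iic.2 hj.2) (Set.mem_Iic.2 hk.2) (congrArg Prod.snd hjk)
  rw [← sum_image hedge]
  exact hs.sum_le_tsum _ fun e _ => hf e

theorem sq_sub_le_graphDist_mul_tsum (hb : ∀ x y, 0 ≤ b x y) {x y : V}
    (hxy : ∃ n p, p 0 = x ∧ p n = y ∧ IsWalk b n p) {u : V → ℝ}
    (hs : Summable fun e : V × V => b e.1 e.2 * (u e.2 - u e.1) ^ 2) :
    (u y - u x) ^ 2 ≤ graphDist b x y * ∑' e : V × V, b e.1 e.2 * (u e.2 - u e.1) ^ 2 := by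
  set W := ∑' e : V × V, b e.1 e.2 * (u e.2 - u e.1) ^ 2
  have hbound : ∀ L, graphDist b x y < L → (u y - u x) ^ 2 ≤ L * W := by
    intro L hL
    obtain ⟨n, p, rfl, rfl, hp, hinj, hlen⟩ := exists_injOn_walk_lt_of_graphDist_lt hxy hL
    calc (u (p n) - u (p 0)) ^ 2
        ≤ walkLength b n p * ∑ j ∈ Icc 1 n, b (p (j - 1)) (p j) * (u (p j) - u (p (j - 1))) ^ 2 :=
          hp.sq_sub_le_walkLength_mul u
      _ ≤ L * W :=
          mul_le_mul hlen.le (sum_walk_le_tsum (fun e => mul_nonneg (hb _ _) (sq_nonneg _)) hs hinj)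
            (sum_nonneg fun _ _ => mul_nonneg (hb _ _) (sq_nonneg _))
            (hp.walkLength_nonneg.trans hlen.le)
  have hlim : Filter.Tendsto (fun L => L * W) (nhdsWithin (graphDist b x y) (Set.Ioi (graphDist b x y)))
      (nhds (graphDist b x y * W)) :=
    ((continuous_mul_const W).tendsto _).mono_left nhdsWithin_le_nhds
  exact ge_of_tendsto hlim (eventually_nhdsWithin_of_forall hbound)

end Walks

section NeumannForm

variable {V : Type*} {b : V → V → ℝ} {c m : V → ℝ}

theorem neumannForm_nonneg (hb : ∀ x y, 0 ≤ b x y) (hcm : ∀ x, 0 ≤ c x + m x) (u : V → ℝ) :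
    0 ≤ neumannForm b c m u := by
  have h₁ : 0 ≤ ∑' e : V × V, b e.1 e.2 * (u e.2 - u e.1) ^ 2 :=
    tsum_nonneg fun e => mul_nonneg (hb e.1 e.2) (sq_nonneg _)
  have h₂ : 0 ≤ ∑' x, (c x + m x) * u x ^ 2 := tsum_nonneg fun x => mul_nonneg (hcm x) (sq_nonneg _)
  unfold neumannForm
  linarith

theorem tsum_le_two_mul_neumannForm (hcm : ∀ x, 0 ≤ c x + m x) (u : V → ℝ) :
    ∑' e : V × V, b e.1 e.2 * (u e.2 - u e.1) ^ 2 ≤ 2 * neumannForm b c m u := by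
  have : 0 ≤ ∑' x, (c x + m x) * u x ^ 2 := tsum_nonneg fun x => mul_nonneg (hcm x) (sq_nonneg _)
  unfold neumannForm
  linarith

theorem sq_le_inv_mul_neumannForm (hb : ∀ x y, 0 ≤ b x y) (hcm : ∀ x, 0 ≤ c x + m x)
    {u : V → ℝ} (hs : Summable fun x => (c x + m x) * u x ^ 2) {x : V} {a : ℝ} (ha : 0 < a)
    (hax : a ≤ c x + m x) :
    u x ^ 2 ≤ a⁻¹ * neumannForm b c m u := by
  have hpot : (c x + m x) * u x ^ 2 ≤ ∑' y, (c y + m y) * u y ^ 2 :=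
    hs.le_tsum x fun y _ => mul_nonneg (hcm y) (sq_nonneg (u y))
  have : 0 ≤ ∑' e : V × V, b e.1 e.2 * (u e.2 - u e.1) ^ 2 :=
    tsum_nonneg fun e => mul_nonneg (hb e.1 e.2) (sq_nonneg _)
  rw [inv_mul_eq_div, le_div_iff₀ ha]
  unfold neumannForm
  nlinarith [sq_nonneg (u x)]

theorem sq_sub_le_two_mul_graphDist_mul_neumannForm (hb : ∀ x y, 0 ≤ b x y)
    (hcm : ∀ x, 0 ≤ c x + m x) {x y : V} (hxy : ∃ n p, p 0 = x ∧ p n = y ∧ IsWalk b n p)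
    {u : V → ℝ} (hs : Summable fun e : V × V => b e.1 e.2 * (u e.2 - u e.1) ^ 2) :
    (u y - u x) ^ 2 ≤ 2 * graphDist b x y * neumannForm b c m u :=
  calc (u y - u x) ^ 2 ≤ graphDist b x y * ∑' e : V × V, b e.1 e.2 * (u e.2 - u e.1) ^ 2 :=
        sq_sub_le_graphDist_mul_tsum hb hxy hs
    _ ≤ graphDist b x y * (2 * neumannForm b c m u) :=
        mul_le_mul_of_nonneg_left (tsum_le_two_mul_neumannForm hcm u) (graphDist_nonneg b x y)
    _ = 2 * graphDist b x y * neumannForm b c m u := by ring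

end NeumannForm

/-- if there is a set `K` of finite intrinsic diameter outside of which
`c + m` is uniformly bounded below, then the Neumann form domain embeds continuously
into `ℓ^∞`. -/
theorem neumann_domain_embeds_into_linfty {V : Type*}
    (b : V → V → ℝ) (c m : V → ℝ)
    (hm : ∀ x, 0 < m x) (hc : ∀ x, 0 ≤ c x) (hb : ∀ x y, 0 ≤ b x y)
    (hconn : ∀ x y : V, ∃ (n : ℕ) (p : ℕ → V), p 0 = x ∧ p n = y ∧
      ∀ j, 1 ≤ j → j ≤ n → 0 < b (p (j - 1)) (p j))
    (K : Set V) (hKne : K.Nonempty)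
    (hdiam : ∃ D : ℝ, ∀ x ∈ K, ∀ y ∈ K, graphDist b x y ≤ D)
    (ctilde : ℝ) (hctilde : 0 < ctilde)
    (hout : ∀ x ∉ K, ctilde ≤ c x + m x) :
    ∃ C > 0, ∀ u : V → ℝ,
      (Summable fun q : V × V => b q.1 q.2 * (u q.2 - u q.1) ^ 2) →
      (Summable fun x : V => (c x + m x) * u x ^ 2) →
      ∀ x : V, |u x| ≤ C * Real.sqrt (neumannForm b c m u) := by
  obtain ⟨o, ho⟩ := hKne
  obtain ⟨D, hD⟩ := hdiam
  have hcm : ∀ x, 0 ≤ c x + m x := fun x => add_nonneg (hc x) (hm x).le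
  have ho_pos : 0 < c o + m o := add_pos_of_nonneg_of_pos (hc o) (hm o)
  have hD0 : 0 ≤ D := (graphDist_nonneg b o o).trans (hD o ho o ho)
  refine ⟨√ctilde⁻¹ + √(c o + m o)⁻¹ + √(2 * D), by positivity, fun u hedge hpot x => ?_⟩
  set S := neumannForm b c m u
  have hS : 0 ≤ S := neumannForm_nonneg hb hcm u
  have hα := mul_nonneg (Real.sqrt_nonneg ctilde⁻¹) (Real.sqrt_nonneg S)
  have hβ := mul_nonneg (Real.sqrt_nonneg (c o + m o)⁻¹) (Real.sqrt_nonneg S)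
  have hγ := mul_nonneg (Real.sqrt_nonneg (2 * D)) (Real.sqrt_nonneg S)
  rw [add_mul, add_mul]
  by_cases hx : x ∈ K
  · have hdiff : |u o - u x| ≤ √(2 * D) * √S :=
      abs_le_sqrt_mul_sqrt_of_sq_le_mul (by positivity)
        ((sq_sub_le_two_mul_graphDist_mul_neumannForm hb hcm (hconn x o) hedge).trans
          (mul_le_mul_of_nonneg_right (by gcongr; exact hD x hx o ho) hS))
    have hbase : |u o| ≤ √(c o + m o)⁻¹ * √S :=
      abs_le_sqrt_mul_sqrt_of_sq_le_mul (by positivity)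
        (sq_le_inv_mul_neumannForm hb hcm hpot ho_pos le_rfl)
    linarith [abs_sub_abs_le_abs_sub (u x) (u o), abs_sub_comm (u x) (u o)]
  · have hx_bound : |u x| ≤ √ctilde⁻¹ * √S :=
      abs_le_sqrt_mul_sqrt_of_sq_le_mul (by positivity)
        (sq_le_inv_mul_neumannForm hb hcm hpot hctilde (hout x hx))
    linarith
end

section
/- Suppose there exists K ⊆ V with m(K) < ∞ and ∑_{x ∈ V\K} m(x)²/(c(x)+m(x)) < ∞. Then the energy space E embeds continuously into ℓ¹_m: there is a constant C > 0 such that ∑_x m(x)|u(x)| ≤ C ‖u‖_E for all u ∈ E, where ‖u‖_E² = q^{(N)}(u). -/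
section CauchySchwarz

variable {ι : Type*}

theorem Real.summable_and_tsum_mul_le_sqrt_mul_sqrt {f g : ι → ℝ}
    (hf : ∀ i, 0 ≤ f i) (hg : ∀ i, 0 ≤ g i)
    (hf_sum : Summable fun i => f i ^ 2) (hg_sum : Summable fun i => g i ^ 2) :
    Summable (fun i => f i * g i) ∧
      ∑' i, f i * g i ≤ √(∑' i, f i ^ 2) * √(∑' i, g i ^ 2) := by
  have h := Real.summable_and_inner_le_Lp_mul_Lq_tsum_of_nonneg Real.HolderConjugate.two_two
    hf hg (by simpa only [Real.rpow_two] using hf_sum) (by simpa only [Real.rpow_two] using hg_sum)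
  simpa only [Real.rpow_two, Real.sqrt_eq_rpow] using h

theorem Real.summable_and_tsum_mul_abs_le_weighted {a w f : ι → ℝ}
    (ha : ∀ i, 0 ≤ a i) (hw : ∀ i, 0 < w i)
    (ha_sum : Summable fun i => a i ^ 2 / w i) (hf_sum : Summable fun i => w i * f i ^ 2) :
    Summable (fun i => a i * |f i|) ∧
      ∑' i, a i * |f i| ≤ √(∑' i, a i ^ 2 / w i) * √(∑' i, w i * f i ^ 2) := by
  have hsq_left (i : ι) : (a i / √(w i)) ^ 2 = a i ^ 2 / w i := by
    rw [div_pow, Real.sq_sqrt (hw i).le]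
  have hsq_right (i : ι) : (√(w i) * |f i|) ^ 2 = w i * f i ^ 2 := by
    rw [mul_pow, Real.sq_sqrt (hw i).le, sq_abs]
  have hfactor (i : ι) : a i / √(w i) * (√(w i) * |f i|) = a i * |f i| := by
    have : √(w i) ≠ 0 := (Real.sqrt_pos.mpr (hw i)).ne'
    field_simp
  have h := summable_and_tsum_mul_le_sqrt_mul_sqrt (f := fun i => a i / √(w i))
    (g := fun i => √(w i) * |f i|) (fun i => div_nonneg (ha i) (Real.sqrt_nonneg _))
    (fun i => by positivity)
    (by simpa only [hsq_left] using ha_sum) (by simpa only [hsq_right] using hf_sum)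
  simpa only [hsq_left, hsq_right, hfactor] using h

end CauchySchwarz

theorem summable_sq_div_of_summable_on_of_summable_on_compl {V : Type*} {c m : V → ℝ}
    (hm : ∀ x, 0 < m x) (hc : ∀ x, 0 ≤ c x) {K : Set V}
    (hK : Summable fun x : K => m x)
    (hsum : Summable fun x : {x : V // x ∉ K} => m x ^ 2 / (c x + m x)) :
    Summable fun x => m x ^ 2 / (c x + m x) := by
  have hcm (x : V) : 0 < c x + m x := add_pos_of_nonneg_of_pos (hc x) (hm x)
  have hle (x : V) : m x ^ 2 / (c x + m x) ≤ m x := by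
    rw [div_le_iff₀ (hcm x), sq]
    nlinarith [hm x, hc x]
  refine summable_subtype_and_compl.mp ⟨?_, hsum⟩
  exact hK.of_nonneg_of_le (fun x => div_nonneg (sq_nonneg _) (hcm x).le) (fun x => hle x)

theorem tsum_mul_sq_le_neumannForm {V : Type*} {b : V → V → ℝ} (c m : V → ℝ)
    (hb : ∀ x y, 0 ≤ b x y) (u : V → ℝ) :
    ∑' x, (c x + m x) * u x ^ 2 ≤ neumannForm b c m u := by
  have : 0 ≤ ∑' q : V × V, b q.1 q.2 * (u q.2 - u q.1) ^ 2 :=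
    tsum_nonneg fun q => mul_nonneg (hb q.1 q.2) (sq_nonneg _)
  unfold neumannForm
  linarith

/-- if there is `K` with `m(K) < ∞` and `∑_{x∉K} m(x)²/(c(x)+m(x)) < ∞`,
then the energy space embeds continuously into `ℓ¹_m`. -/
theorem energy_embeds_into_l1 {V : Type*}
    (b : V → V → ℝ) (c m : V → ℝ)
    (hm : ∀ x, 0 < m x) (hc : ∀ x, 0 ≤ c x) (hb : ∀ x y, 0 ≤ b x y)
    (K : Set V)
    (hK : Summable fun x : K => m x)
    (hsum : Summable fun x : {x : V // x ∉ K} => (m x) ^ 2 / (c x + m x)) :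
    ∃ C > 0, ∀ u : V → ℝ,
      (Summable fun q : V × V => b q.1 q.2 * (u q.2 - u q.1) ^ 2) →
      (Summable fun x : V => (c x + m x) * u x ^ 2) →
      Summable (fun x : V => m x * |u x|) ∧
        ∑' x : V, m x * |u x| ≤ C * Real.sqrt (neumannForm b c m u) := by
  set A := ∑' x, m x ^ 2 / (c x + m x)
  refine ⟨√A + 1, by positivity, fun u _ hu => ?_⟩
  obtain ⟨hsummable, hbound⟩ := Real.summable_and_tsum_mul_abs_le_weighted (f := u)
    (fun x => (hm x).le) (fun x => add_pos_of_nonneg_of_pos (hc x) (hm x))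
    (summable_sq_div_of_summable_on_of_summable_on_compl hm hc hK hsum) hu
  refine ⟨hsummable, hbound.trans ?_⟩
  gcongr
  · linarith
  · exact tsum_mul_sq_le_neumannForm c m hb u
end
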